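/- arXiv:0910.2060 — 6 statements merged into one kernel-verified Lean document; each statement's English description precedes it below -/
import Mathlib

section
/- Let a > 2 and L > 0. Suppose f : [0,∞) → ℝ is continuous with f(ρ) ≥ 1/4 for all ρ ≥ 0 and |f(ρ) − 1| ≤ L e^{−aρ} for all ρ ≥ 0. Suppose y : [0,∞) → ℝ is differentiable, satisfies the Riccati equation y′(ρ) + y(ρ)² = f(ρ) for all ρ ≥ 0, and y(0) > 0. Then there exists a positive constant C, depending only on L and y(0), such that |y(ρ) − 1| ≤ C e^{−2ρ} for all ρ ≥ 0. -/
/-!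
The interval `[min (y 0) (1/4), y 0 + L + 1]` is invariant: at its ends `y² - f` has the sign
that pushes `y` back inside, because `1/4 ≤ f ≤ 1 + L`. On it, the Cayley-type ratio
`w = (y - 1)/(y + 1)` satisfies the linearised equation `w' = -2w + 2(f - 1)/(y + 1)²`, so
`(e^{2ρ} w)' = 2e^{2ρ}(f - 1)/(y + 1)² = O(e^{-(a-2)ρ})` is integrable on `[0, ∞)` as `a > 2`.
Hence `e^{2ρ} w` stays bounded, and `|y - 1| = |w| (y + 1)` decays like `e^{-2ρ}`.
-/

open Set Real

theorem riccati_mem_Icc {f y : ℝ → ℝ} {α β : ℝ}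
    (hy : ∀ ρ, 0 ≤ ρ → HasDerivWithinAt y (f ρ - y ρ ^ 2) (Ici 0) ρ)
    (hfα : ∀ ρ, 0 ≤ ρ → α ^ 2 < f ρ) (hfβ : ∀ ρ, 0 ≤ ρ → f ρ < β ^ 2)
    (h0 : y 0 ∈ Icc α β) {ρ : ℝ} (hρ : 0 ≤ ρ) : y ρ ∈ Icc α β := by
  have hcont : ContinuousOn y (Icc 0 ρ) := fun t ht =>
    (hy t ht.1).continuousWithinAt.mono Icc_subset_Ici_self
  have hderiv : ∀ t ∈ Ico 0 ρ, HasDerivWithinAt y (f t - y t ^ 2) (Ici t) t := fun t ht =>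
    (hy t ht.1).mono (Ici_subset_Ici.mpr ht.1)
  constructor
  · have hneg := image_le_of_deriv_right_lt_deriv_boundary' hcont.neg (fun t ht => (hderiv t ht).neg)
      (B := fun _ => -α) (neg_le_neg h0.1) continuousOn_const
      (fun _ _ => hasDerivWithinAt_const _ _ _) (fun t ht hyt => by
        rw [neg_inj.mp hyt]; linarith [hfα t ht.1]) ⟨hρ, le_rfl⟩
    exact neg_le_neg_iff.mp hneg
  · exact image_le_of_deriv_right_lt_deriv_boundary' hcont hderiv (B := fun _ => β) h0.2
      continuousOn_const (fun _ _ => hasDerivWithinAt_const _ _ _) (fun t ht hyt => by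
        rw [hyt]; linarith [hfβ t ht.1]) ⟨hρ, le_rfl⟩

theorem abs_le_abs_add_div_of_abs_deriv_le_exp {g g' : ℝ → ℝ} {K c : ℝ} (hc : 0 < c)
    (hg : ∀ t, 0 ≤ t → HasDerivWithinAt g (g' t) (Ici 0) t)
    (hg' : ∀ t, 0 ≤ t → |g' t| ≤ K * exp (-c * t)) {t : ℝ} (ht : 0 ≤ t) :
    |g t| ≤ |g 0| + K / c := by
  have hK : 0 ≤ K := by simpa using (abs_nonneg _).trans (hg' 0 le_rfl)
  have hB : ∀ s, HasDerivAt (fun s => |g 0| + K / c * (1 - exp (-c * s))) (K * exp (-c * s)) s := by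
    intro s
    refine ((((hasDerivAt_id' s).const_mul (-c)).exp.const_sub 1).const_mul (K / c)).const_add
      |g 0| |>.congr_deriv ?_
    field_simp
  have hfence := image_norm_le_of_norm_deriv_right_le_deriv_boundary
    (fun s hs => (hg s hs.1).continuousWithinAt.mono Icc_subset_Ici_self)
    (fun s hs => (hg s hs.1).mono (Ici_subset_Ici.mpr hs.1)) (by simp) hB
    (fun s hs => hg' s hs.1) ⟨ht, le_rfl⟩
  have : 0 ≤ K / c * exp (-c * t) := by positivity
  rw [Real.norm_eq_abs] at hfence
  linarith

theorem HasDerivWithinAt.exp_mul_riccati_ratio {y : ℝ → ℝ} {s : Set ℝ} {f ρ : ℝ}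
    (hy : HasDerivWithinAt y (f - y ρ ^ 2) s ρ) (hne : y ρ + 1 ≠ 0) :
    HasDerivWithinAt (fun t => Real.exp (2 * t) * ((y t - 1) / (y t + 1)))
      (2 * Real.exp (2 * ρ) * (f - 1) / (y ρ + 1) ^ 2) s ρ := by
  have hexp : HasDerivWithinAt (fun t => Real.exp (2 * t)) (Real.exp (2 * ρ) * (2 * 1)) s ρ :=
    ((hasDerivAt_id' ρ).const_mul 2).exp.hasDerivWithinAt
  refine (hexp.mul ((hy.sub_const 1).div (hy.add_const 1) hne)).congr_deriv ?_
  simp only [Pi.div_apply]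
  field_simp
  ring

theorem abs_riccati_ratio_le {a L : ℝ} {f y : ℝ → ℝ} (ha : 2 < a)
    (hf : ∀ ρ, 0 ≤ ρ → |f ρ - 1| ≤ L * exp (-a * ρ))
    (hy : ∀ ρ, 0 ≤ ρ → HasDerivWithinAt y (f ρ - y ρ ^ 2) (Ici 0) ρ)
    (hy_nonneg : ∀ ρ, 0 ≤ ρ → 0 ≤ y ρ) {ρ : ℝ} (hρ : 0 ≤ ρ) :
    |(y ρ - 1) / (y ρ + 1)| ≤ (|(y 0 - 1) / (y 0 + 1)| + 2 * L / (a - 2)) * exp (-2 * ρ) := by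
  have hderiv_le : ∀ t, 0 ≤ t →
      |2 * exp (2 * t) * (f t - 1) / (y t + 1) ^ 2| ≤ 2 * L * exp (-(a - 2) * t) := by
    intro t ht
    have hy1 : 1 ≤ (y t + 1) ^ 2 := by nlinarith [hy_nonneg t ht]
    calc |2 * exp (2 * t) * (f t - 1) / (y t + 1) ^ 2|
        = 2 * exp (2 * t) * |f t - 1| / (y t + 1) ^ 2 := by
          rw [abs_div, abs_mul, abs_of_pos (by positivity : 0 < 2 * exp (2 * t)),
            abs_of_pos (by positivity : (0 : ℝ) < (y t + 1) ^ 2)]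
      _ ≤ 2 * exp (2 * t) * |f t - 1| := div_le_self (by positivity) hy1
      _ ≤ 2 * exp (2 * t) * (L * exp (-a * t)) := by gcongr; exact hf t ht
      _ = 2 * L * exp (-(a - 2) * t) := by rw [mul_mul_mul_comm, ← exp_add]; ring_nf
  have hbound := abs_le_abs_add_div_of_abs_deriv_le_exp (sub_pos.mpr ha)
    (fun t ht => (hy t ht).exp_mul_riccati_ratio (by linarith [hy_nonneg t ht])) hderiv_le hρ
  rw [abs_mul, abs_of_pos (exp_pos _)] at hbound
  simp only [mul_zero, exp_zero, one_mul] at hbound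
  calc |(y ρ - 1) / (y ρ + 1)| = exp (-2 * ρ) * (exp (2 * ρ) * |(y ρ - 1) / (y ρ + 1)|) := by
        rw [← mul_assoc, ← exp_add]; simp
    _ ≤ exp (-2 * ρ) * (|(y 0 - 1) / (y 0 + 1)| + 2 * L / (a - 2)) := by gcongr
    _ = _ := mul_comm _ _

theorem riccati_decay_a_gt_two_general (a L : ℝ) (ha : 2 < a) (hL : 0 < L)
    (f y : ℝ → ℝ)
    (hf_lb : ∀ ρ, 0 ≤ ρ → (1 : ℝ) / 4 ≤ f ρ)
    (hf_close : ∀ ρ, 0 ≤ ρ → |f ρ - 1| ≤ L * Real.exp (-a * ρ))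
    (hy : ∀ ρ, 0 ≤ ρ → HasDerivWithinAt y (f ρ - (y ρ) ^ 2) (Set.Ici 0) ρ)
    (hy0 : 0 < y 0) :
    ∃ C : ℝ, 0 < C ∧ ∀ ρ, 0 ≤ ρ → |y ρ - 1| ≤ C * Real.exp (-2 * ρ) := by
  set α := min (y 0) (1 / 4)
  set β := y 0 + L + 1
  have hα : 0 < α := lt_min hy0 (by norm_num)
  have hf_ub : ∀ ρ, 0 ≤ ρ → f ρ ≤ 1 + L := fun ρ hρ => by
    have : exp (-a * ρ) ≤ 1 := exp_le_one_iff.mpr (by nlinarith)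
    nlinarith [(abs_le.mp (hf_close ρ hρ)).2]
  have hy_mem : ∀ ρ, 0 ≤ ρ → y ρ ∈ Icc α β := fun ρ hρ =>
    riccati_mem_Icc hy (fun t ht => by nlinarith [min_le_right (y 0) (1 / 4), hf_lb t ht])
      (fun t ht => by nlinarith [hf_ub t ht]) ⟨min_le_left _ _, by linarith⟩ hρ
  refine ⟨(β + 1) * (|(y 0 - 1) / (y 0 + 1)| + 2 * L / (a - 2)),
    by have := sub_pos.mpr ha; positivity, fun ρ hρ => ?_⟩
  have hyρ := hy_mem ρ hρ
  have hpos : 0 < y ρ + 1 := by linarith [hyρ.1]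
  have hdecay := abs_riccati_ratio_le ha hf_close hy
    (fun t ht => hα.le.trans (hy_mem t ht).1) hρ
  calc |y ρ - 1| = |(y ρ - 1) / (y ρ + 1)| * (y ρ + 1) := by
        rw [abs_div, abs_of_pos hpos, div_mul_cancel₀ _ hpos.ne']
    _ ≤ (|(y 0 - 1) / (y 0 + 1)| + 2 * L / (a - 2)) * exp (-2 * ρ) * (β + 1) := by
        gcongr
        exact hyρ.2
    _ = _ := by ring

/-- Case `a > 2` of the ODE comparison lemma (Lemma 2.1): a solution of the
Riccati equation `y' + y² = f` with `f` exponentially close to `1` of order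
`a > 2` and `y(0) > 0` satisfies `|y - 1| ≤ C e^{-2ρ}`. -/
theorem riccati_decay_a_gt_two (a L : ℝ) (ha : 2 < a) (hL : 0 < L)
    (f y : ℝ → ℝ)
    (hf_cont : ContinuousOn f (Set.Ici 0))
    (hf_lb : ∀ ρ, 0 ≤ ρ → (1 : ℝ) / 4 ≤ f ρ)
    (hf_close : ∀ ρ, 0 ≤ ρ → |f ρ - 1| ≤ L * Real.exp (-a * ρ))
    (hy : ∀ ρ, 0 ≤ ρ → HasDerivWithinAt y (f ρ - (y ρ) ^ 2) (Set.Ici 0) ρ)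
    (hy0 : 0 < y 0) :
    ∃ C : ℝ, 0 < C ∧ ∀ ρ, 0 ≤ ρ → |y ρ - 1| ≤ C * Real.exp (-2 * ρ) :=
  riccati_decay_a_gt_two_general a L ha hL f y hf_lb hf_close hy hy0
end

section
/- Let a = 2 and L > 0. Suppose f : [0,∞) → ℝ is continuous with f(ρ) ≥ 1/4 for all ρ ≥ 0 and |f(ρ) − 1| ≤ L e^{−2ρ} for all ρ ≥ 0. Suppose y : [0,∞) → ℝ is differentiable, satisfies the Riccati equation y′(ρ) + y(ρ)² = f(ρ) for all ρ ≥ 0, and y(0) > 0. Then there exists a positive constant C, depending only on L and y(0), such that |y(ρ) − 1| ≤ C (1 + ρ) e^{−2ρ} for all ρ ≥ 0. -/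
/-!
Write `w = y - 1`, so that `w' = (f - 1) - (y + 1) w`. Since `f ≥ 1/4 > m²` for
`m = min (y 0) (1/4)`, the solution can never cross down through `m`, so the damping
coefficient satisfies `y + 1 ≥ 1 + m`. The barrier `C e^{-(1 + m/2) ρ}` then traps `|w|`,
a decay strictly faster than `e^{-ρ}`. Writing the equation instead as
`w' = (f - 1 - w²) - 2 w`, the forcing of `e^{2ρ} w` is at most `L + C² e^{-m ρ}`, whose
primitive grows like `L ρ`; this gives `|w| ≤ C' (1 + ρ) e^{-2ρ}`.
-/

open Set Real

theorem image_le_of_deriv_right_lt_deriv_boundary_Ici {f f' B B' : ℝ → ℝ} {a : ℝ}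
    (hf : ∀ x, a ≤ x → HasDerivWithinAt f (f' x) (Ici a) x) (hB : ∀ x, HasDerivAt B (B' x) x)
    (ha : f a ≤ B a) (bound : ∀ x, a ≤ x → f x = B x → f' x < B' x) :
    ∀ x, a ≤ x → f x ≤ B x := fun x hx =>
  image_le_of_deriv_right_lt_deriv_boundary (b := x)
    (fun t ht => (hf t ht.1).continuousWithinAt.mono Icc_subset_Ici_self)
    (fun t ht => (hf t ht.1).mono (Ici_subset_Ici.2 ht.1)) ha hB
    (fun t ht => bound t ht.1) ⟨hx, le_rfl⟩

theorem le_of_riccati_of_sq_lt {f y : ℝ → ℝ}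
    (hy : ∀ ρ, 0 ≤ ρ → HasDerivWithinAt y (f ρ - y ρ ^ 2) (Ici 0) ρ) {m : ℝ} (h0 : m ≤ y 0)
    (hf : ∀ ρ, 0 ≤ ρ → m ^ 2 < f ρ) (ρ : ℝ) (hρ : 0 ≤ ρ) : m ≤ y ρ := by
  have := image_le_of_deriv_right_lt_deriv_boundary_Ici (B := fun _ => -m) (B' := fun _ => 0)
    (fun x hx => (hy x hx).neg) (fun _ => hasDerivAt_const _ _) (neg_le_neg h0)
    (fun x hx hyx => by rw [neg_inj.1 hyx]; linarith [hf x hx]) ρ hρ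
  exact neg_le_neg_iff.1 this

theorem le_mul_exp_of_hasDerivWithinAt_sub_mul {w g p : ℝ → ℝ} {α β L C : ℝ}
    (hw : ∀ ρ, 0 ≤ ρ → HasDerivWithinAt w (g ρ - p ρ * w ρ) (Ici 0) ρ)
    (hp : ∀ ρ, 0 ≤ ρ → α ≤ p ρ) (hg : ∀ ρ, 0 ≤ ρ → g ρ ≤ L * exp (-β * ρ))
    (hC : 0 ≤ C) (hw0 : w 0 ≤ C) (hLC : L < (α - β) * C) :
    ∀ ρ, 0 ≤ ρ → w ρ ≤ C * exp (-β * ρ) := by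
  refine image_le_of_deriv_right_lt_deriv_boundary_Ici hw
    (fun x => ((hasDerivAt_id x).const_mul (-β)).exp.const_mul C) (by simpa using hw0) ?_
  intro x hx hwx
  have hpw : α * (C * exp (-β * x)) ≤ p x * w x := by
    rw [hwx]; exact mul_le_mul_of_nonneg_right (hp x hx) (by positivity)
  have hLCx := mul_lt_mul_of_pos_right hLC (exp_pos (-β * x))
  simp only [id, mul_one]
  linarith [hg x hx]

theorem abs_le_mul_exp_of_hasDerivWithinAt_sub_mul {w g p : ℝ → ℝ} {α β L C : ℝ}
    (hw : ∀ ρ, 0 ≤ ρ → HasDerivWithinAt w (g ρ - p ρ * w ρ) (Ici 0) ρ)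
    (hp : ∀ ρ, 0 ≤ ρ → α ≤ p ρ) (hg : ∀ ρ, 0 ≤ ρ → |g ρ| ≤ L * exp (-β * ρ))
    (hw0 : |w 0| ≤ C) (hLC : L < (α - β) * C) (ρ : ℝ) (hρ : 0 ≤ ρ) :
    |w ρ| ≤ C * exp (-β * ρ) := by
  have hC : 0 ≤ C := (abs_nonneg _).trans hw0
  refine abs_le.2 ⟨neg_le.1 ?_, ?_⟩
  · refine le_mul_exp_of_hasDerivWithinAt_sub_mul (w := fun ρ => -w ρ) (g := fun ρ => -g ρ)
      (fun ρ hρ => ?_) hp (fun ρ hρ => (neg_le_abs _).trans (hg ρ hρ)) hC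
      (neg_le.1 (abs_le.1 hw0).1) hLC ρ hρ
    exact (hw ρ hρ).neg.congr_deriv (by ring)
  · exact le_mul_exp_of_hasDerivWithinAt_sub_mul hw hp
      (fun ρ hρ => (le_abs_self _).trans (hg ρ hρ)) hC (abs_le.1 hw0).2 hLC ρ hρ

theorem exp_mul_abs_le_of_hasDerivWithinAt_sub_const_mul {w g G G' : ℝ → ℝ} {α : ℝ}
    (hw : ∀ ρ, 0 ≤ ρ → HasDerivWithinAt w (g ρ - α * w ρ) (Ici 0) ρ)
    (hG : ∀ ρ, HasDerivAt G (G' ρ) ρ) (hg : ∀ ρ, 0 ≤ ρ → exp (α * ρ) * |g ρ| ≤ G' ρ)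
    (ρ : ℝ) (hρ : 0 ≤ ρ) : exp (α * ρ) * |w ρ| ≤ |w 0| + (G ρ - G 0) := by
  have hv : ∀ x, 0 ≤ x →
      HasDerivWithinAt (fun x => exp (α * x) * w x) (exp (α * x) * g x) (Ici 0) x := by
    intro x hx
    exact (((hasDerivAt_id x).const_mul α).exp.hasDerivWithinAt.mul (hw x hx)).congr_deriv
      (by simp only [id, mul_one]; ring)
  have := image_norm_le_of_norm_deriv_right_le_deriv_boundary (b := ρ)
    (fun t ht => (hv t ht.1).continuousWithinAt.mono Icc_subset_Ici_self)
    (fun t ht => (hv t ht.1).mono (Ici_subset_Ici.2 ht.1))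
    (B := fun x => |w 0| + (G x - G 0)) (by simp)
    (fun x => ((hG x).sub_const (G 0)).const_add |w 0|) ?_ ⟨hρ, le_rfl⟩
  · simpa [abs_mul] using this
  · intro x hx
    simpa [abs_mul] using hg x hx.1

theorem abs_sub_one_le_of_riccati {f y : ℝ → ℝ} {L m : ℝ} (hL : 0 < L) (hm : 0 < m)
    (hm2 : m ≤ 2)
    (hy : ∀ ρ, 0 ≤ ρ → HasDerivWithinAt y (f ρ - y ρ ^ 2) (Ici 0) ρ)
    (hf : ∀ ρ, 0 ≤ ρ → |f ρ - 1| ≤ L * exp (-2 * ρ)) (hym : ∀ ρ, 0 ≤ ρ → m ≤ y ρ)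
    (ρ : ℝ) (hρ : 0 ≤ ρ) :
    |y ρ - 1| ≤ (|y 0 - 1| + 4 * L / m) * exp (-(1 + m / 2) * ρ) := by
  have hLm : m / 2 * (4 * L / m) = 2 * L := by field_simp; ring
  refine abs_le_mul_exp_of_hasDerivWithinAt_sub_mul (w := fun ρ => y ρ - 1)
    (g := fun ρ => f ρ - 1) (p := fun ρ => y ρ + 1) (α := 1 + m)
    (fun ρ hρ => ((hy ρ hρ).sub_const 1).congr_deriv (by ring))
    (fun ρ hρ => by linarith [hym ρ hρ])
    (fun ρ hρ => (hf ρ hρ).trans (mul_le_mul_of_nonneg_left (exp_le_exp.2 (by nlinarith)) hL.le))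
    (le_add_of_nonneg_right (by positivity)) ?_ ρ hρ
  nlinarith [abs_nonneg (y 0 - 1)]

theorem exp_mul_abs_sub_one_le_of_riccati {f y : ℝ → ℝ} {L C δ : ℝ} (hδ : 0 < δ)
    (hy : ∀ ρ, 0 ≤ ρ → HasDerivWithinAt y (f ρ - y ρ ^ 2) (Ici 0) ρ)
    (hf : ∀ ρ, 0 ≤ ρ → |f ρ - 1| ≤ L * exp (-2 * ρ))
    (hdecay : ∀ ρ, 0 ≤ ρ → |y ρ - 1| ≤ C * exp (-(1 + δ / 2) * ρ)) (ρ : ℝ) (hρ : 0 ≤ ρ) :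
    exp (2 * ρ) * |y ρ - 1| ≤ |y 0 - 1| + L * ρ + C ^ 2 / δ := by
  have hG : ∀ ρ, HasDerivAt (fun ρ => L * ρ - C ^ 2 / δ * exp (-δ * ρ))
      (L + C ^ 2 * exp (-δ * ρ)) ρ := fun ρ =>
    (((hasDerivAt_id ρ).const_mul L).sub
      (((hasDerivAt_id ρ).const_mul (-δ)).exp.const_mul (C ^ 2 / δ))).congr_deriv
      (by simp only [id]; field_simp; ring)
  have hg : ∀ ρ, 0 ≤ ρ →
      exp (2 * ρ) * |f ρ - 1 - (y ρ - 1) ^ 2| ≤ L + C ^ 2 * exp (-δ * ρ) := by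
    intro ρ hρ
    have hsq : (y ρ - 1) ^ 2 ≤ C ^ 2 * exp (-(2 + δ) * ρ) :=
      calc (y ρ - 1) ^ 2 = |y ρ - 1| ^ 2 := (sq_abs _).symm
        _ ≤ (C * exp (-(1 + δ / 2) * ρ)) ^ 2 := pow_le_pow_left₀ (abs_nonneg _) (hdecay ρ hρ) 2
        _ = C ^ 2 * exp (-(2 + δ) * ρ) := by rw [mul_pow, ← exp_nat_mul]; ring_nf
    have e₁ : exp (2 * ρ) * exp (-2 * ρ) = 1 := by rw [← exp_add]; ring_nf; exact exp_zero
    have e₂ : exp (2 * ρ) * exp (-(2 + δ) * ρ) = exp (-δ * ρ) := by rw [← exp_add]; ring_nf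
    calc exp (2 * ρ) * |f ρ - 1 - (y ρ - 1) ^ 2|
        ≤ exp (2 * ρ) * (L * exp (-2 * ρ) + C ^ 2 * exp (-(2 + δ) * ρ)) := by
          refine mul_le_mul_of_nonneg_left ((abs_sub _ _).trans ?_) (exp_pos _).le
          rw [abs_of_nonneg (sq_nonneg (y ρ - 1))]
          exact add_le_add (hf ρ hρ) hsq
      _ = L + C ^ 2 * exp (-δ * ρ) := by
          linear_combination L * e₁ + C ^ 2 * e₂
  have hw := exp_mul_abs_le_of_hasDerivWithinAt_sub_const_mul (w := fun ρ => y ρ - 1) (α := 2)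
    (fun ρ hρ => ((hy ρ hρ).sub_const 1).congr_deriv (by ring)) hG hg ρ hρ
  simp only [mul_zero, exp_zero, mul_one] at hw
  linarith [show 0 ≤ C ^ 2 / δ * exp (-δ * ρ) by positivity]

theorem riccati_decay_a_eq_two_general (L : ℝ) (hL : 0 < L)
    (f y : ℝ → ℝ)
    (hf_lb : ∀ ρ, 0 ≤ ρ → (1 : ℝ) / 4 ≤ f ρ)
    (hf_close : ∀ ρ, 0 ≤ ρ → |f ρ - 1| ≤ L * Real.exp (-2 * ρ))
    (hy : ∀ ρ, 0 ≤ ρ → HasDerivWithinAt y (f ρ - (y ρ) ^ 2) (Set.Ici 0) ρ)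
    (hy0 : 0 < y 0) :
    ∃ C : ℝ, 0 < C ∧ ∀ ρ, 0 ≤ ρ → |y ρ - 1| ≤ C * (1 + ρ) * Real.exp (-2 * ρ) := by
  set m := min (y 0) (1 / 4)
  have hm : 0 < m := lt_min hy0 (by norm_num)
  have hm4 : m ≤ 1 / 4 := min_le_right _ _
  have hym : ∀ ρ, 0 ≤ ρ → m ≤ y ρ :=
    le_of_riccati_of_sq_lt hy (min_le_left _ _) fun ρ hρ => by nlinarith [hf_lb ρ hρ]
  set C₁ := |y 0 - 1| + 4 * L / m
  have hdecay := abs_sub_one_le_of_riccati hL hm (by linarith) hy hf_close hym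
  refine ⟨|y 0 - 1| + L + C₁ ^ 2 / m, by positivity, fun ρ hρ => ?_⟩
  have hbound := exp_mul_abs_sub_one_le_of_riccati hm hy hf_close hdecay ρ hρ
  have hE : exp (-2 * ρ) * exp (2 * ρ) = 1 := by rw [← exp_add]; ring_nf; exact exp_zero
  calc |y ρ - 1| = exp (-2 * ρ) * (exp (2 * ρ) * |y ρ - 1|) := by
        rw [← mul_assoc, hE, one_mul]
    _ ≤ exp (-2 * ρ) * (|y 0 - 1| + L * ρ + C₁ ^ 2 / m) := by gcongr
    _ ≤ exp (-2 * ρ) * ((|y 0 - 1| + L + C₁ ^ 2 / m) * (1 + ρ)) := by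
        gcongr
        nlinarith [abs_nonneg (y 0 - 1), show 0 ≤ C₁ ^ 2 / m by positivity]
    _ = (|y 0 - 1| + L + C₁ ^ 2 / m) * (1 + ρ) * exp (-2 * ρ) := by ring

/-- Case `a = 2` of the ODE comparison lemma (Lemma 2.1): a solution of the
Riccati equation `y' + y² = f` with `|f - 1| ≤ L e^{-2ρ}` and `y(0) > 0`
satisfies `|y - 1| ≤ C (1 + ρ) e^{-2ρ}`. -/
theorem riccati_decay_a_eq_two (L : ℝ) (hL : 0 < L)
    (f y : ℝ → ℝ)
    (hf_cont : ContinuousOn f (Set.Ici 0))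
    (hf_lb : ∀ ρ, 0 ≤ ρ → (1 : ℝ) / 4 ≤ f ρ)
    (hf_close : ∀ ρ, 0 ≤ ρ → |f ρ - 1| ≤ L * Real.exp (-2 * ρ))
    (hy : ∀ ρ, 0 ≤ ρ → HasDerivWithinAt y (f ρ - (y ρ) ^ 2) (Set.Ici 0) ρ)
    (hy0 : 0 < y 0) :
    ∃ C : ℝ, 0 < C ∧ ∀ ρ, 0 ≤ ρ → |y ρ - 1| ≤ C * (1 + ρ) * Real.exp (-2 * ρ) :=
  riccati_decay_a_eq_two_general L hL f y hf_lb hf_close hy hy0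
end

section
/- Let 0 < a < 2 and L > 0. Suppose f : [0,∞) → ℝ is continuous with f(ρ) ≥ 1/4 for all ρ ≥ 0 and |f(ρ) − 1| ≤ L e^{−aρ} for all ρ ≥ 0. Suppose y : [0,∞) → ℝ is differentiable, satisfies the Riccati equation y′(ρ) + y(ρ)² = f(ρ) for all ρ ≥ 0, and y(0) > 0. Then there exists a positive constant C, depending only on L and y(0), such that |y(ρ) − 1| ≤ C e^{−aρ} for all ρ ≥ 0. -/
/-!
Solutions of `y' + y² = f` are ordered by their initial values: for a subsolution `v` below a
supersolution `u`, the difference `w = u - v` satisfies `w' + (u + v) w ≥ 0`, so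
`w · exp ∫ (u + v)` is nondecreasing. Since `f ≥ 0`, the constant `0` is a subsolution and
`y ≥ 0`; since `a < 2`, `1 + C e^{-at}` is a supersolution as soon as `(2 - a) C ≥ L`.
For the lower bound put `ε = (2 - a) / 4` and wait until `L e^{-at} ≤ ε²`. From then on `y`
grows at rate at least `ε (1 - ε)` while it is below `1 - ε`, so it reaches `1 - ε` at some
time `ρ`, after which `1 - ε e^{-a (t - ρ)}` is a subsolution.
-/

open Set Real Filter

theorem nonneg_of_hasDerivWithinAt_add_mul_nonneg {s : ℝ} {w w' p : ℝ → ℝ}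
    (hw : ∀ t ∈ Ici s, HasDerivWithinAt w (w' t) (Ici s) t) (hp : ContinuousOn p (Ici s))
    (hineq : ∀ t ∈ Ici s, 0 ≤ w' t + p t * w t) (h0 : 0 ≤ w s) :
    ∀ t ∈ Ici s, 0 ≤ w t := by
  -- `q` extends `p` continuously to the whole line, so that its primitive is differentiable.
  set q : ℝ → ℝ := fun t => p (max s t)
  have hq : Continuous q :=
    hp.comp_continuous (continuous_const.max continuous_id) fun t => le_max_left s t
  set P : ℝ → ℝ := fun t => ∫ x in s..t, q x
  have hderiv : ∀ t ∈ Ici s, HasDerivWithinAt (fun t => w t * exp (P t))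
      ((w' t + p t * w t) * exp (P t)) (Ici s) t := by
    intro t ht
    have hqt : q t = p t := congrArg p (max_eq_right ht)
    refine ((hw t ht).mul (hq.integral_hasStrictDerivAt s t).hasDerivAt.exp.hasDerivWithinAt
      ).congr_deriv ?_
    rw [hqt]
    ring
  have hmono : MonotoneOn (fun t => w t * exp (P t)) (Ici s) := by
    refine monotoneOn_of_hasDerivWithinAt_nonneg (f' := fun t => (w' t + p t * w t) * exp (P t))
      (convex_Ici s)
      (fun t ht => (hderiv t ht).continuousWithinAt) (fun t ht => ?_) (fun t ht => ?_)
    · exact (hderiv t (interior_subset ht)).mono interior_subset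
    · exact mul_nonneg (hineq t (interior_subset ht)) (exp_pos _).le
  intro t ht
  have h := hmono self_mem_Ici ht ht
  simp only [P, intervalIntegral.integral_same, exp_zero, mul_one] at h
  exact nonneg_of_mul_nonneg_left (h0.trans h) (exp_pos _)

theorem riccati_comparison {s : ℝ} {u v u' v' : ℝ → ℝ}
    (hu : ∀ t ∈ Ici s, HasDerivWithinAt u (u' t) (Ici s) t)
    (hv : ∀ t ∈ Ici s, HasDerivWithinAt v (v' t) (Ici s) t)
    (hle : ∀ t ∈ Ici s, v' t + v t ^ 2 ≤ u' t + u t ^ 2) (h0 : v s ≤ u s) :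
    ∀ t ∈ Ici s, v t ≤ u t := by
  have hw := nonneg_of_hasDerivWithinAt_add_mul_nonneg (w := u - v) (p := u + v)
    (fun t ht => (hu t ht).sub (hv t ht))
    (fun t ht => ((hu t ht).continuousWithinAt.add (hv t ht).continuousWithinAt))
    (fun t ht => by simp only [Pi.add_apply, Pi.sub_apply]; nlinarith [hle t ht])
    (sub_nonneg.2 h0)
  exact fun t ht => sub_nonneg.1 (hw t ht)

theorem exists_forall_ge_mul_exp_neg_le {a δ : ℝ} (ha : 0 < a) (hδ : 0 < δ) (L : ℝ) :
    ∃ T, ∀ t ≥ T, L * exp (-a * t) ≤ δ := by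
  have h : Tendsto (fun t => L * exp (-a * t)) atTop (nhds 0) := by
    simpa [neg_mul] using
      (tendsto_exp_neg_atTop_nhds_zero.comp (tendsto_id.const_mul_atTop ha)).const_mul L
  exact eventually_atTop.1 ((h.eventually (gt_mem_nhds hδ)).mono fun _ => le_of_lt)

section Riccati

variable {s : ℝ} {f y : ℝ → ℝ}

theorem const_le_of_riccati {c : ℝ}
    (hy : ∀ t ∈ Ici s, HasDerivWithinAt y (f t - y t ^ 2) (Ici s) t)
    (hf : ∀ t ∈ Ici s, c ^ 2 ≤ f t) (h0 : c ≤ y s) : ∀ t ∈ Ici s, c ≤ y t :=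
  riccati_comparison hy (fun t _ => hasDerivWithinAt_const t _ c)
    (fun t ht => by linarith [hf t ht]) h0

theorem le_one_add_mul_exp_of_riccati {a L C : ℝ}
    (hy : ∀ t ∈ Ici s, HasDerivWithinAt y (f t - y t ^ 2) (Ici s) t)
    (hf : ∀ t ∈ Ici s, f t ≤ 1 + L * exp (-a * t)) (hC : L ≤ (2 - a) * C)
    (h0 : y s ≤ 1 + C * exp (-a * s)) : ∀ t ∈ Ici s, y t ≤ 1 + C * exp (-a * t) := by
  have hB : ∀ t, HasDerivAt (fun t => 1 + C * exp (-a * t)) (-a * C * exp (-a * t)) t := by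
    intro t
    refine (((hasDerivAt_id' t).const_mul (-a)).exp.const_mul C).const_add 1 |>.congr_deriv ?_
    ring
  refine riccati_comparison (fun t _ => (hB t).hasDerivWithinAt) hy (fun t ht => ?_) h0
  have he := (exp_pos (-a * t)).le
  nlinarith [hf t ht, mul_le_mul_of_nonneg_right hC he, sq_nonneg (C * exp (-a * t))]

theorem one_sub_mul_exp_le_of_riccati {a L K : ℝ} (ha : 0 ≤ a)
    (hy : ∀ t ∈ Ici s, HasDerivWithinAt y (f t - y t ^ 2) (Ici s) t)
    (hf : ∀ t ∈ Ici s, 1 - L * exp (-a * t) ≤ f t)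
    (hK : K ^ 2 * exp (-a * s) + L ≤ (2 - a) * K)
    (h0 : 1 - K * exp (-a * s) ≤ y s) : ∀ t ∈ Ici s, 1 - K * exp (-a * t) ≤ y t := by
  have hB : ∀ t, HasDerivAt (fun t => 1 - K * exp (-a * t)) (a * K * exp (-a * t)) t := by
    intro t
    refine (((hasDerivAt_id' t).const_mul (-a)).exp.const_mul K).const_sub 1 |>.congr_deriv ?_
    ring
  refine riccati_comparison hy (fun t _ => (hB t).hasDerivWithinAt) (fun t ht => ?_) h0
  have he := exp_pos (-a * t)
  have hdecay : exp (-a * t) ≤ exp (-a * s) := exp_le_exp.2 (by nlinarith [mem_Ici.1 ht])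
  have hK' : K ^ 2 * exp (-a * t) + L ≤ (2 - a) * K := by
    nlinarith [mul_le_mul_of_nonneg_left hdecay (sq_nonneg K)]
  nlinarith [hf t ht, mul_le_mul_of_nonneg_right hK' he.le]

theorem exists_mem_Icc_one_sub_le_of_riccati {ε : ℝ} (hε0 : 0 < ε) (hε1 : ε < 1)
    (hy : ∀ t ∈ Ici s, HasDerivWithinAt y (f t - y t ^ 2) (Ici s) t)
    (hf : ∀ t ∈ Ici s, 1 - ε ≤ f t) (hy_nonneg : ∀ t ∈ Ici s, 0 ≤ y t) :
    ∃ t ∈ Icc s (s + (ε * (1 - ε))⁻¹), 1 - ε ≤ y t := by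
  by_contra! hlt
  set c := ε * (1 - ε)
  have hc : 0 < c := mul_pos hε0 (sub_pos.2 hε1)
  -- while `0 ≤ y < 1 - ε`, the equation forces `y' ≥ (1 - ε) - (1 - ε) ^ 2 = c`
  have hmono : MonotoneOn (fun t => y t - c * t) (Icc s (s + c⁻¹)) := by
    have hsub : Icc s (s + c⁻¹) ⊆ Ici s := Icc_subset_Ici_self
    have hderiv : ∀ t ∈ Icc s (s + c⁻¹),
        HasDerivWithinAt (fun t => y t - c * t) (f t - y t ^ 2 - c) (Icc s (s + c⁻¹)) t := by
      intro t ht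
      exact ((hy t (hsub ht)).mono hsub).sub ((hasDerivAt_id' t).const_mul c).hasDerivWithinAt
        |>.congr_deriv (by ring)
    refine monotoneOn_of_hasDerivWithinAt_nonneg (f' := fun t => f t - y t ^ 2 - c)
      (convex_Icc _ _) (fun t ht => (hderiv t ht).continuousWithinAt)
      (fun t ht => (hderiv t (interior_subset ht)).mono interior_subset) (fun t ht => ?_)
    have ht := interior_subset ht
    nlinarith [hf t (hsub ht), hy_nonneg t (hsub ht), hlt t ht]
  have hs : s ≤ s + c⁻¹ := le_add_of_nonneg_right (inv_pos.2 hc).le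
  have h := hmono (left_mem_Icc.2 hs) (right_mem_Icc.2 hs) hs
  have hc1 : c * (s + c⁻¹) = c * s + 1 := by field_simp
  simp only [hc1] at h
  linarith [hy_nonneg s self_mem_Ici, hlt _ (right_mem_Icc.2 hs)]

theorem exists_one_sub_mul_exp_le_of_riccati {a L : ℝ} (ha0 : 0 < a) (ha2 : a < 2)
    (hy : ∀ t ∈ Ici s, HasDerivWithinAt y (f t - y t ^ 2) (Ici s) t)
    (hf : ∀ t ∈ Ici s, 1 - L * exp (-a * t) ≤ f t) (hy_nonneg : ∀ t ∈ Ici s, 0 ≤ y t) :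
    ∃ K, ∀ t ∈ Ici s, 1 - K * exp (-a * t) ≤ y t := by
  have hy_of_le : ∀ r ∈ Ici s, ∀ t ∈ Ici r, HasDerivWithinAt y (f t - y t ^ 2) (Ici r) t :=
    fun r hr t ht => (hy t (Ici_subset_Ici.2 hr ht)).mono (Ici_subset_Ici.2 hr)
  set ε := (2 - a) / 4 with hε
  have hε0 : 0 < ε := by linarith
  have hε1 : ε < 1 := by linarith
  obtain ⟨T, hT⟩ := exists_forall_ge_mul_exp_neg_le ha0 (pow_pos hε0 2) L
  set r := max s T
  have hsr : s ≤ r := le_max_left s T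
  have hTr : T ≤ r := le_max_right s T
  obtain ⟨ρ, hρ, hyρ⟩ := exists_mem_Icc_one_sub_le_of_riccati hε0 hε1 (hy_of_le r hsr)
    (fun t ht => by nlinarith [hf t (hsr.trans ht), hT t (hTr.trans ht)])
    (fun t ht => hy_nonneg t (hsr.trans ht))
  have hρs : ρ ∈ Ici s := hsr.trans hρ.1
  set K := ε * exp (a * ρ)
  have hKρ : K * exp (-a * ρ) = ε := by
    rw [mul_assoc, ← exp_add]
    simp
  have hK : K ^ 2 * exp (-a * ρ) + L ≤ (2 - a) * K := by
    have hL : L ≤ ε * K :=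
      calc L = L * exp (-a * ρ) * exp (a * ρ) := by rw [mul_assoc, ← exp_add]; simp
        _ ≤ ε ^ 2 * exp (a * ρ) :=
          mul_le_mul_of_nonneg_right (hT ρ (hTr.trans hρ.1)) (exp_pos _).le
        _ = ε * K := by ring
    rw [sq, mul_assoc, hKρ]
    nlinarith [mul_pos hε0 (exp_pos (a * ρ))]
  have hlate := one_sub_mul_exp_le_of_riccati ha0.le (hy_of_le ρ hρs)
    (fun t ht => hf t (Ici_subset_Ici.2 hρs ht)) hK (by rw [hKρ]; exact hyρ)
  refine ⟨exp (a * ρ), fun t ht => ?_⟩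
  rcases le_or_gt ρ t with hρt | htρ
  · have hK_le : K ≤ exp (a * ρ) := mul_le_of_le_one_left (exp_pos _).le hε1.le
    linarith [hlate t hρt, mul_le_mul_of_nonneg_right hK_le (exp_pos (-a * t)).le]
  · have h1 : 1 ≤ exp (a * ρ) * exp (-a * t) := by
      rw [← exp_add]
      exact one_le_exp (by nlinarith)
    linarith [hy_nonneg t ht]

end Riccati

theorem riccati_decay_a_lt_two_general (a L : ℝ) (ha0 : 0 < a) (ha2 : a < 2)
    (f y : ℝ → ℝ)
    (hf_lb : ∀ ρ, 0 ≤ ρ → (1 : ℝ) / 4 ≤ f ρ)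
    (hf_close : ∀ ρ, 0 ≤ ρ → |f ρ - 1| ≤ L * Real.exp (-a * ρ))
    (hy : ∀ ρ, 0 ≤ ρ → HasDerivWithinAt y (f ρ - (y ρ) ^ 2) (Set.Ici 0) ρ)
    (hy0 : 0 < y 0) :
    ∃ C : ℝ, 0 < C ∧ ∀ ρ, 0 ≤ ρ → |y ρ - 1| ≤ C * Real.exp (-a * ρ) := by
  have hy_nonneg : ∀ ρ ∈ Ici 0, 0 ≤ y ρ :=
    const_le_of_riccati hy (fun ρ hρ => by linarith [hf_lb ρ hρ]) hy0.le
  set C := max (y 0) (L / (2 - a))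
  have hLC : L ≤ (2 - a) * C := by
    rw [← div_le_iff₀' (by linarith)]
    exact le_max_right _ _
  have hupper := le_one_add_mul_exp_of_riccati hy
    (fun ρ hρ => by linarith [(abs_le.1 (hf_close ρ hρ)).2]) hLC
    (by simp only [mul_zero, exp_zero, mul_one]; linarith [le_max_left (y 0) (L / (2 - a))])
  obtain ⟨K, hlower⟩ := exists_one_sub_mul_exp_le_of_riccati (L := L) ha0 ha2 hy
    (fun ρ hρ => by linarith [(abs_le.1 (hf_close ρ hρ)).1]) hy_nonneg
  refine ⟨max C K, hy0.trans_le ((le_max_left _ _).trans (le_max_left _ _)), fun ρ hρ => ?_⟩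
  have he := (exp_pos (-a * ρ)).le
  rw [abs_sub_le_iff]
  constructor
  · linarith [hupper ρ hρ, mul_le_mul_of_nonneg_right (le_max_left C K) he]
  · linarith [hlower ρ hρ, mul_le_mul_of_nonneg_right (le_max_right C K) he]

/-- Case `0 < a < 2` of the ODE comparison lemma (Lemma 2.1): a solution of the
Riccati equation `y' + y² = f` with `|f - 1| ≤ L e^{-aρ}` and `y(0) > 0`
satisfies `|y - 1| ≤ C e^{-aρ}`. -/
theorem riccati_decay_a_lt_two (a L : ℝ) (ha0 : 0 < a) (ha2 : a < 2) (hL : 0 < L)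
    (f y : ℝ → ℝ)
    (hf_cont : ContinuousOn f (Set.Ici 0))
    (hf_lb : ∀ ρ, 0 ≤ ρ → (1 : ℝ) / 4 ≤ f ρ)
    (hf_close : ∀ ρ, 0 ≤ ρ → |f ρ - 1| ≤ L * Real.exp (-a * ρ))
    (hy : ∀ ρ, 0 ≤ ρ → HasDerivWithinAt y (f ρ - (y ρ) ^ 2) (Set.Ici 0) ρ)
    (hy0 : 0 < y 0) :
    ∃ C : ℝ, 0 < C ∧ ∀ ρ, 0 ≤ ρ → |y ρ - 1| ≤ C * Real.exp (-a * ρ) :=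
  riccati_decay_a_lt_two_general a L ha0 ha2 f y hf_lb hf_close hy hy0
end

section
/- Let a > 0 and L > 0. Suppose f : [0,∞) → ℝ is continuous with f(ρ) ≥ 1/4 for all ρ ≥ 0 and |f(ρ) − 1| ≤ L e^{−aρ} for all ρ ≥ 0. Suppose y : [0,∞) → ℝ is differentiable, satisfies the Riccati equation y′(ρ) + y(ρ)² = f(ρ) for all ρ ≥ 0, and y(0) > 0. Then there exists a positive constant C, depending only on L and y(0), such that 0 < y(ρ) < C for all ρ ≥ 0. -/
/-!
If `y` ever reached a level `C` with `C² > sup f`, then `y' = f - C² < 0` there, so `y` cannot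
cross `C` upwards; likewise it cannot cross a level `c > 0` with `c² < 1/4 ≤ f` downwards.
Since `f ≤ 1 + L`, the solution is trapped between such levels.
-/

open Set

theorem le_of_forall_hasDerivWithinAt_Ici_of_deriv_neg_at_level {g g' : ℝ → ℝ} {t₀ B : ℝ}
    (hg : ∀ t ∈ Ici t₀, HasDerivWithinAt g (g' t) (Ici t₀) t) (h₀ : g t₀ ≤ B)
    (hB : ∀ t ∈ Ici t₀, g t = B → g' t < 0) :
    ∀ t ∈ Ici t₀, g t ≤ B := by
  intro t ht
  refine image_le_of_deriv_right_lt_deriv_boundary (B := fun _ => B) (B' := fun _ => 0)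
    (fun s hs => (hg s hs.1).continuousWithinAt.mono (Icc_subset_Ici_self))
    (fun s hs => (hg s hs.1).mono (Ici_subset_Ici.2 hs.1)) h₀
    (fun _ => hasDerivAt_const _ _) (fun s hs => hB s hs.1) ⟨ht, le_rfl⟩

section Riccati

variable {f y : ℝ → ℝ} {t₀ : ℝ}

theorem riccati_le_of_sup_lt_sq
    (hy : ∀ t ∈ Ici t₀, HasDerivWithinAt y (f t - y t ^ 2) (Ici t₀) t) {M C : ℝ}
    (hf : ∀ t ∈ Ici t₀, f t ≤ M) (hMC : M < C ^ 2) (h₀ : y t₀ ≤ C) :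
    ∀ t ∈ Ici t₀, y t ≤ C :=
  le_of_forall_hasDerivWithinAt_Ici_of_deriv_neg_at_level hy h₀ fun t ht hyt => by
    linarith [hf t ht, hyt ▸ hMC]

theorem riccati_ge_of_sq_lt_inf
    (hy : ∀ t ∈ Ici t₀, HasDerivWithinAt y (f t - y t ^ 2) (Ici t₀) t) {m c : ℝ}
    (hf : ∀ t ∈ Ici t₀, m ≤ f t) (hcm : c ^ 2 < m) (h₀ : c ≤ y t₀) :
    ∀ t ∈ Ici t₀, c ≤ y t := by
  have := le_of_forall_hasDerivWithinAt_Ici_of_deriv_neg_at_level (g := fun t => -y t)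
    (B := -c) (fun t ht => (hy t ht).neg) (neg_le_neg h₀) fun t ht hyt => by
      have : y t = c := neg_injective hyt
      linarith [hf t ht, this ▸ hcm]
  exact fun t ht => neg_le_neg_iff.1 (this t ht)

end Riccati

theorem riccati_uniform_bound_general (a L : ℝ) (ha : 0 < a) (hL : 0 < L)
    (f y : ℝ → ℝ)
    (hf_lb : ∀ ρ, 0 ≤ ρ → (1 : ℝ) / 4 ≤ f ρ)
    (hf_close : ∀ ρ, 0 ≤ ρ → |f ρ - 1| ≤ L * Real.exp (-a * ρ))
    (hy : ∀ ρ, 0 ≤ ρ → HasDerivWithinAt y (f ρ - (y ρ) ^ 2) (Set.Ici 0) ρ)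
    (hy0 : 0 < y 0) :
    ∃ C : ℝ, 0 < C ∧ ∀ ρ, 0 ≤ ρ → 0 < y ρ ∧ y ρ < C := by
  have hf_ub : ∀ ρ ∈ Ici (0 : ℝ), f ρ ≤ 1 + L := fun ρ hρ => by
    have hexp : Real.exp (-a * ρ) ≤ 1 :=
      Real.exp_le_one_iff.2 (mul_nonpos_of_nonpos_of_nonneg (by linarith) hρ)
    linarith [le_abs_self (f ρ - 1), hf_close ρ hρ, mul_le_of_le_one_right hL.le hexp]
  set C := y 0 + 1 + L
  obtain ⟨c, hc, hc_le, hc_y0⟩ : ∃ c : ℝ, 0 < c ∧ c ≤ 1 / 4 ∧ c ≤ y 0 :=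
    ⟨min (y 0) (1 / 4), lt_min hy0 (by norm_num), min_le_right _ _, min_le_left _ _⟩
  have hupper := riccati_le_of_sup_lt_sq hy hf_ub (C := C) (by nlinarith) (by linarith)
  have hlower := riccati_ge_of_sq_lt_inf hy hf_lb (by nlinarith) hc_y0
  exact ⟨C + 1, by positivity, fun ρ hρ =>
    ⟨hc.trans_le (hlower ρ hρ), (hupper ρ hρ).trans_lt (lt_add_one C)⟩⟩

/-- A priori uniform bound (first step of the proof of Lemma 2.1): a solution
of the Riccati equation `y' + y² = f` with `f ≥ 1/4`, `|f - 1| ≤ L e^{-aρ}`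
and `y(0) > 0` satisfies `0 < y < C`. -/
theorem riccati_uniform_bound (a L : ℝ) (ha : 0 < a) (hL : 0 < L)
    (f y : ℝ → ℝ)
    (hf_cont : ContinuousOn f (Set.Ici 0))
    (hf_lb : ∀ ρ, 0 ≤ ρ → (1 : ℝ) / 4 ≤ f ρ)
    (hf_close : ∀ ρ, 0 ≤ ρ → |f ρ - 1| ≤ L * Real.exp (-a * ρ))
    (hy : ∀ ρ, 0 ≤ ρ → HasDerivWithinAt y (f ρ - (y ρ) ^ 2) (Set.Ici 0) ρ)
    (hy0 : 0 < y 0) :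
    ∃ C : ℝ, 0 < C ∧ ∀ ρ, 0 ≤ ρ → 0 < y ρ ∧ y ρ < C :=
  riccati_uniform_bound_general a L ha hL f y hf_lb hf_close hy hy0
end

section
/- Let Λ > 0, c > 0, C > 0 and 0 < β < 2. Suppose y : [0,∞) → ℝ is differentiable, Ω : [0,∞) → ℝ is continuous with |Ω(ρ)| ≤ Λ (1 + ρ) e^{−cρ} for all ρ ≥ 0, h : [0,∞) → ℝ satisfies |h(ρ)| ≤ C e^{−βρ} for all ρ ≥ 0, and y′(ρ) + (2 + Ω(ρ)) y(ρ) = h(ρ) for all ρ ≥ 0. Then there exists a positive constant Λ′, depending only on Λ, c, C, β and |y(0)|, such that |y(ρ)| ≤ Λ′ e^{−βρ} for all ρ ≥ 0. -/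
/-!
Let `Q` be a primitive of `Ω` with `Q 0 = 0`. The integrating factor `e^{2ρ + Q}` turns the
equation into `(y e^{2ρ + Q})' = h e^{2ρ + Q}`. Since `Λ (1 + ρ) e^{-cρ}` has finite integral
`Λ (1/c + 1/c²)`, `Q` stays bounded, so the right-hand side grows at most like `e^{(2 - β)ρ}`.
Integrating it and dividing back by `e^{2ρ + Q}` leaves `e^{-βρ}`, because `β < 2` makes
`e^{-2ρ} ≤ e^{-βρ}`.
-/

open Real Set

theorem norm_sub_le_sub_of_norm_deriv_le {E : Type*} [NormedAddCommGroup E] [NormedSpace ℝ E]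
    {f f' : ℝ → E} {B B' : ℝ → ℝ} {a x : ℝ}
    (hf : ∀ t, a ≤ t → HasDerivWithinAt f (f' t) (Ici a) t)
    (hB : ∀ t, a ≤ t → HasDerivWithinAt B (B' t) (Ici a) t)
    (bound : ∀ t, a ≤ t → ‖f' t‖ ≤ B' t) (hx : a ≤ x) :
    ‖f x - f a‖ ≤ B x - B a := by
  refine image_norm_le_of_norm_deriv_right_le_deriv_boundary' (f := fun t => f t - f a)
    (B := fun t => B t - B a) ?_
    (fun t ht => ((hf t ht.1).mono (Ici_subset_Ici.2 ht.1)).sub_const _)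
    (by simp) ?_ (fun t ht => ((hB t ht.1).mono (Ici_subset_Ici.2 ht.1)).sub_const _)
    (fun t ht => bound t ht.1) ⟨hx, le_rfl⟩
  · exact fun t ht =>
      ((hf t ht.1).continuousWithinAt.mono Icc_subset_Ici_self).sub continuousWithinAt_const
  · exact fun t ht =>
      ((hB t ht.1).continuousWithinAt.mono Icc_subset_Ici_self).sub continuousWithinAt_const

theorem exists_hasDerivWithinAt_Ici_of_continuousOn {E : Type*} [NormedAddCommGroup E]
    [NormedSpace ℝ E] [CompleteSpace E] {f : ℝ → E} {a : ℝ} (hf : ContinuousOn f (Ici a)) :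
    ∃ F : ℝ → E, F a = 0 ∧ ∀ x, a ≤ x → HasDerivWithinAt F (f x) (Ici a) x := by
  have hg : Continuous fun t => f (max t a) :=
    hf.comp_continuous (continuous_id.max continuous_const) fun t => le_max_right t a
  refine ⟨fun u => ∫ t in a..u, f (max t a), intervalIntegral.integral_same, fun x hx => ?_⟩
  simpa [max_eq_left hx] using (hg.integral_hasStrictDerivAt a x).hasDerivAt.hasDerivWithinAt

theorem hasDerivAt_neg_exp_mul_one_add_div {c : ℝ} (hc : c ≠ 0) (t : ℝ) :
    HasDerivAt (fun t => -(exp (-c * t) * ((1 + t) / c + 1 / c ^ 2)))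
      ((1 + t) * exp (-c * t)) t := by
  refine ((((hasDerivAt_id' t).const_mul (-c)).exp.mul
    (((hasDerivAt_id' t).const_add 1).div_const c |>.add_const (1 / c ^ 2))).neg).congr_deriv ?_
  field_simp
  ring

theorem abs_sub_le_of_abs_deriv_le_one_add_mul_exp {Q Ω : ℝ → ℝ} {Λ c x : ℝ}
    (hΛ : 0 ≤ Λ) (hc : 0 < c)
    (hQ : ∀ t, 0 ≤ t → HasDerivWithinAt Q (Ω t) (Ici 0) t)
    (hΩ : ∀ t, 0 ≤ t → |Ω t| ≤ Λ * (1 + t) * exp (-c * t)) (hx : 0 ≤ x) :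
    |Q x - Q 0| ≤ Λ * (1 / c + 1 / c ^ 2) := by
  have hB t (_ : 0 ≤ t) := ((hasDerivAt_neg_exp_mul_one_add_div hc.ne' t).const_mul Λ
    |>.hasDerivWithinAt (s := Ici 0))
  calc |Q x - Q 0|
      ≤ Λ * -(exp (-c * x) * ((1 + x) / c + 1 / c ^ 2))
        - Λ * -(exp (-c * 0) * ((1 + 0) / c + 1 / c ^ 2)) :=
        norm_sub_le_sub_of_norm_deriv_le hQ hB (fun t ht => by simpa [mul_assoc] using hΩ t ht) hx
    _ = Λ * (1 / c + 1 / c ^ 2) - Λ * (exp (-c * x) * ((1 + x) / c + 1 / c ^ 2)) := by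
        simp only [mul_zero, exp_zero, add_zero]
        ring
    _ ≤ Λ * (1 / c + 1 / c ^ 2) := sub_le_self _ (by positivity)

theorem abs_sub_le_of_abs_deriv_le_mul_exp {w w' : ℝ → ℝ} {K a x : ℝ} (ha : 0 < a)
    (hw : ∀ t, 0 ≤ t → HasDerivWithinAt w (w' t) (Ici 0) t)
    (bound : ∀ t, 0 ≤ t → |w' t| ≤ K * exp (a * t)) (hx : 0 ≤ x) :
    |w x - w 0| ≤ K / a * (exp (a * x) - 1) := by
  have hB t (_ : 0 ≤ t) :
      HasDerivWithinAt (fun t => K / a * exp (a * t)) (K * exp (a * t)) (Ici 0) t := by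
    refine (((hasDerivAt_id' t).const_mul a).exp.const_mul (K / a)).congr_deriv ?_
      |>.hasDerivWithinAt
    field_simp
  simpa [mul_sub] using norm_sub_le_sub_of_norm_deriv_le hw hB bound hx

theorem hasDerivWithinAt_mul_exp_of_linear {y P : ℝ → ℝ} {h p x : ℝ} {s : Set ℝ}
    (hy : HasDerivWithinAt y (h - p * y x) s x) (hP : HasDerivWithinAt P p s x) :
    HasDerivWithinAt (fun t => y t * exp (P t)) (h * exp (P x)) s x :=
  (hy.mul hP.exp).congr_deriv (by ring)

theorem abs_le_of_abs_mul_exp_le {y q A B M β ρ : ℝ} (hβ : β ≤ 2) (hρ : 0 ≤ ρ) (hB : 0 ≤ B)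
    (hq : |q| ≤ M) (hy : |y * exp (2 * ρ + q)| ≤ B + A * exp ((2 - β) * ρ)) :
    |y| ≤ (B + A) * exp M * exp (-β * ρ) := by
  have hy_eq : |y| = |y * exp (2 * ρ + q)| * exp (-(2 * ρ + q)) := by
    rw [abs_mul, abs_exp, mul_assoc, ← exp_add, add_neg_cancel, exp_zero, mul_one]
  have hfactor : exp (-(2 * ρ + q)) ≤ exp M * exp (-2 * ρ) := by
    rw [← exp_add]
    exact exp_le_exp.2 (by linarith [neg_abs_le q])
  have hdecay : exp (-2 * ρ) ≤ exp (-β * ρ) := exp_le_exp.2 (by nlinarith)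
  have hgrowth : exp ((2 - β) * ρ) * exp (-2 * ρ) = exp (-β * ρ) := by
    rw [← exp_add]
    ring_nf
  calc |y| ≤ (B + A * exp ((2 - β) * ρ)) * (exp M * exp (-2 * ρ)) := by
        rw [hy_eq]
        gcongr
        exact (abs_nonneg _).trans hy
    _ = exp M * (B * exp (-2 * ρ) + A * exp (-β * ρ)) := by
        rw [← hgrowth]
        ring
    _ ≤ exp M * (B * exp (-β * ρ) + A * exp (-β * ρ)) := by gcongr
    _ = (B + A) * exp M * exp (-β * ρ) := by ring

theorem perturbed_linear_ode_decay_general (Λ c C β : ℝ)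
    (hΛ : 0 < Λ) (hc : 0 < c) (hC : 0 < C) (hβ2 : β < 2)
    (y Ω h : ℝ → ℝ)
    (hΩ_cont : ContinuousOn Ω (Set.Ici 0))
    (hΩ : ∀ ρ, 0 ≤ ρ → |Ω ρ| ≤ Λ * (1 + ρ) * Real.exp (-c * ρ))
    (hh : ∀ ρ, 0 ≤ ρ → |h ρ| ≤ C * Real.exp (-β * ρ))
    (hy : ∀ ρ, 0 ≤ ρ → HasDerivWithinAt y (h ρ - (2 + Ω ρ) * y ρ) (Set.Ici 0) ρ) :
    ∃ Λ' : ℝ, 0 < Λ' ∧ ∀ ρ, 0 ≤ ρ → |y ρ| ≤ Λ' * Real.exp (-β * ρ) := by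
  have hβ : 0 < 2 - β := sub_pos.2 hβ2
  obtain ⟨Q, hQ0, hQ⟩ := exists_hasDerivWithinAt_Ici_of_continuousOn hΩ_cont
  set M := Λ * (1 / c + 1 / c ^ 2)
  have hQM ρ (hρ : 0 ≤ ρ) : |Q ρ| ≤ M := by
    simpa only [hQ0, sub_zero] using
      abs_sub_le_of_abs_deriv_le_one_add_mul_exp hΛ.le hc hQ hΩ hρ
  have hw ρ (hρ : 0 ≤ ρ) :
      HasDerivWithinAt (fun ρ => y ρ * exp (2 * ρ + Q ρ)) (h ρ * exp (2 * ρ + Q ρ)) (Ici 0) ρ :=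
    hasDerivWithinAt_mul_exp_of_linear (hy ρ hρ)
      ((((hasDerivAt_id' ρ).const_mul 2).hasDerivWithinAt.add (hQ ρ hρ)).congr_deriv (by ring))
  have hw' ρ (hρ : 0 ≤ ρ) : |h ρ * exp (2 * ρ + Q ρ)| ≤ C * exp M * exp ((2 - β) * ρ) := by
    rw [abs_mul, abs_exp]
    calc |h ρ| * exp (2 * ρ + Q ρ) ≤ C * exp (-β * ρ) * exp (2 * ρ + M) := by
          gcongr
          · exact hh ρ hρ
          · exact (le_abs_self _).trans (hQM ρ hρ)
      _ = C * exp M * exp ((2 - β) * ρ) := by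
          simp only [mul_assoc, ← exp_add]
          ring_nf
  refine ⟨(|y 0| + C * exp M / (2 - β)) * exp M, by positivity,
    fun ρ hρ => abs_le_of_abs_mul_exp_le hβ2.le hρ (abs_nonneg _) (hQM ρ hρ) ?_⟩
  have hw_sub := abs_sub_le_of_abs_deriv_le_mul_exp hβ hw hw' hρ
  simp only [hQ0, mul_zero, zero_add, exp_zero, mul_one] at hw_sub
  have hK : 0 ≤ C * exp M / (2 - β) := by positivity
  linarith [abs_sub_abs_le_abs_sub (y ρ * exp (2 * ρ + Q ρ)) (y 0)]

/-- Perturbed linear ODE estimate (from the proof of Proposition 2.2): if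
`y' + (2 + Ω) y = h` with `|Ω(ρ)| ≤ Λ (1 + ρ) e^{-cρ}` and `|h(ρ)| ≤ C e^{-βρ}`
for some `0 < β < 2`, then `|y(ρ)| ≤ Λ' e^{-βρ}`. -/
theorem perturbed_linear_ode_decay (Λ c C β : ℝ)
    (hΛ : 0 < Λ) (hc : 0 < c) (hC : 0 < C) (hβ0 : 0 < β) (hβ2 : β < 2)
    (y Ω h : ℝ → ℝ)
    (hΩ_cont : ContinuousOn Ω (Set.Ici 0))
    (hΩ : ∀ ρ, 0 ≤ ρ → |Ω ρ| ≤ Λ * (1 + ρ) * Real.exp (-c * ρ))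
    (hh : ∀ ρ, 0 ≤ ρ → |h ρ| ≤ C * Real.exp (-β * ρ))
    (hy : ∀ ρ, 0 ≤ ρ → HasDerivWithinAt y (h ρ - (2 + Ω ρ) * y ρ) (Set.Ici 0) ρ) :
    ∃ Λ' : ℝ, 0 < Λ' ∧ ∀ ρ, 0 ≤ ρ → |y ρ| ≤ Λ' * Real.exp (-β * ρ) :=
  perturbed_linear_ode_decay_general Λ c C β hΛ hc hC hβ2 y Ω h hΩ_cont hΩ hh hy
end

section
/- Let t₀ ≥ 0 and Λ > 0. Suppose φ : [t₀, ∞) → ℝ is differentiable with |φ(t)| ≤ 1 for all t ≥ t₀ and φ(t₀) > −1, and suppose q : [t₀, ∞) → ℝ is continuous with |q(t) − 1| ≤ Λ e^{−2t} for all t ≥ t₀ and φ′(t) = (1 − φ(t)²) q(t) for all t ≥ t₀. Then there exists a positive constant C, depending only on Λ, t₀ and φ(t₀), such that 0 ≤ 1 − φ(t) ≤ C e^{−2t} for all t ≥ t₀. -/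
/-!
Since `(1 - φ)' = -(1 - φ)(1 + φ) q` and `(1 + φ)' = (1 + φ)(1 - φ) q`, the substitution
`w = (1 - φ) / (1 + φ)` linearizes the Riccati equation to `w' = -2 q w`. Before that, `1 + φ`
stays positive: it solves a linear equation whose coefficient `(1 - φ) q` is bounded below by
`-2 Λ e^{-2t}`, which has finite integral. Then `q ≥ 1 - Λ e^{-2t}` makes
`w(t) e^{2t + Λ e^{-2t}}` nonincreasing, so `w = O(e^{-2t})`, and `1 - φ = w (1 + φ) ≤ 2 w`.
-/

open Real Set

theorem hasDerivWithinAt_mul_exp {y B : ℝ → ℝ} {y' B' t : ℝ} {s : Set ℝ}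
    (hy : HasDerivWithinAt y y' s t) (hB : HasDerivAt B B' t) :
    HasDerivWithinAt (fun t => y t * exp (B t)) ((y' + B' * y t) * exp (B t)) s t := by
  refine (hy.mul hB.exp.hasDerivWithinAt).congr_deriv ?_
  ring

section IntegratingFactor

variable {D : Set ℝ} {y y' B B' : ℝ → ℝ}

theorem monotoneOn_mul_exp_of_le_deriv (hD : Convex ℝ D)
    (hy : ∀ t ∈ D, HasDerivWithinAt y (y' t) D t) (hB : ∀ t, HasDerivAt B (B' t) t)
    (h : ∀ t ∈ interior D, -(B' t * y t) ≤ y' t) :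
    MonotoneOn (fun t => y t * exp (B t)) D :=
  monotoneOn_of_hasDerivWithinAt_nonneg hD (f' := fun t => (y' t + B' t * y t) * exp (B t))
    (fun t ht => (hasDerivWithinAt_mul_exp (hy t ht) (hB t)).continuousWithinAt)
    (fun t ht =>
      (hasDerivWithinAt_mul_exp (hy t (interior_subset ht)) (hB t)).mono interior_subset)
    fun t ht => mul_nonneg (by linarith [h t ht]) (exp_pos _).le

theorem antitoneOn_mul_exp_of_deriv_le (hD : Convex ℝ D)
    (hy : ∀ t ∈ D, HasDerivWithinAt y (y' t) D t) (hB : ∀ t, HasDerivAt B (B' t) t)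
    (h : ∀ t ∈ interior D, y' t ≤ -(B' t * y t)) :
    AntitoneOn (fun t => y t * exp (B t)) D :=
  antitoneOn_of_hasDerivWithinAt_nonpos hD (f' := fun t => (y' t + B' t * y t) * exp (B t))
    (fun t ht => (hasDerivWithinAt_mul_exp (hy t ht) (hB t)).continuousWithinAt)
    (fun t ht =>
      (hasDerivWithinAt_mul_exp (hy t (interior_subset ht)) (hB t)).mono interior_subset)
    fun t ht => mul_nonpos_of_nonpos_of_nonneg (by linarith [h t ht]) (exp_pos _).le

end IntegratingFactor

theorem hasDerivAt_mul_exp_neg_two_mul (Λ t : ℝ) :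
    HasDerivAt (fun t => Λ * exp (-2 * t)) (-2 * Λ * exp (-2 * t)) t := by
  refine ((((hasDerivAt_id t).const_mul (-2)).exp).const_mul Λ).congr_deriv ?_
  simp only [id, mul_one]
  ring

section Riccati

variable {φ q : ℝ → ℝ} {t₀ Λ : ℝ}

theorem one_add_pos_of_riccati (hφ_bd : ∀ t, t₀ ≤ t → |φ t| ≤ 1) (hφ0 : -1 < φ t₀)
    (hq : ∀ t, t₀ ≤ t → |q t - 1| ≤ Λ * exp (-2 * t))
    (hφ : ∀ t, t₀ ≤ t → HasDerivWithinAt φ ((1 - φ t ^ 2) * q t) (Ici t₀) t)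
    {t : ℝ} (ht : t₀ ≤ t) : 0 < 1 + φ t := by
  have hmono : MonotoneOn (fun t => (1 + φ t) * exp (-(Λ * exp (-2 * t)))) (Ici t₀) := by
    refine monotoneOn_mul_exp_of_le_deriv (convex_Ici t₀) (fun t ht => (hφ t ht).const_add 1)
      (fun t => (hasDerivAt_mul_exp_neg_two_mul Λ t).neg) fun t ht => ?_
    rw [interior_Ici] at ht
    obtain ⟨hφ_lower, hφ_upper⟩ := abs_le.mp (hφ_bd t ht.le)
    have hq_lower := (abs_le.mp (hq t ht.le)).1
    have hx : 0 ≤ Λ * exp (-2 * t) := (abs_nonneg _).trans (hq t ht.le)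
    -- `0 ≤ 1 - φ ≤ 2`, so `(1 - φ) q ≥ min 0 (2 q)`
    have hcoeff : -2 * (Λ * exp (-2 * t)) ≤ (1 - φ t) * q t := by
      nlinarith [mul_nonneg (sub_nonneg.mpr hφ_upper) hx]
    nlinarith [mul_le_mul_of_nonneg_left hcoeff (neg_le_iff_add_nonneg'.mp hφ_lower)]
  have h := hmono self_mem_Ici ht ht
  exact (mul_pos_iff_of_pos_right (exp_pos _)).mp
    ((mul_pos (neg_lt_iff_pos_add'.mp hφ0) (exp_pos _)).trans_le h)

theorem hasDerivWithinAt_one_sub_div_one_add {s : Set ℝ} {t : ℝ}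
    (hφ : HasDerivWithinAt φ ((1 - φ t ^ 2) * q t) s t) (hpos : 1 + φ t ≠ 0) :
    HasDerivWithinAt (fun t => (1 - φ t) / (1 + φ t))
      (-2 * q t * ((1 - φ t) / (1 + φ t))) s t := by
  refine ((hφ.const_sub 1).div (hφ.const_add 1) hpos).congr_deriv ?_
  field_simp
  ring

theorem one_sub_div_one_add_le_of_riccati (hφ_bd : ∀ t, t₀ ≤ t → |φ t| ≤ 1)
    (hq : ∀ t, t₀ ≤ t → |q t - 1| ≤ Λ * exp (-2 * t))
    (hφ : ∀ t, t₀ ≤ t → HasDerivWithinAt φ ((1 - φ t ^ 2) * q t) (Ici t₀) t)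
    (hpos : ∀ t, t₀ ≤ t → 0 < 1 + φ t) {t : ℝ} (ht : t₀ ≤ t) :
    (1 - φ t) / (1 + φ t) ≤
      (1 - φ t₀) / (1 + φ t₀) * exp (2 * t₀ + Λ * exp (-2 * t₀)) * exp (-2 * t) := by
  set w := fun t => (1 - φ t) / (1 + φ t)
  have hw_nonneg : ∀ t, t₀ ≤ t → 0 ≤ w t := fun t ht =>
    div_nonneg (sub_nonneg.mpr (abs_le.mp (hφ_bd t ht)).2) (hpos t ht).le
  have hanti : AntitoneOn (fun t => w t * exp (2 * t + Λ * exp (-2 * t))) (Ici t₀) := by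
    refine antitoneOn_mul_exp_of_deriv_le (convex_Ici t₀)
      (fun t ht => hasDerivWithinAt_one_sub_div_one_add (hφ t ht) (hpos t ht).ne')
      (fun t => ((hasDerivAt_id t).const_mul 2).add (hasDerivAt_mul_exp_neg_two_mul Λ t))
      fun t ht => ?_
    rw [interior_Ici] at ht
    have hq_lower := (abs_le.mp (hq t ht.le)).1
    simp only [mul_one]
    nlinarith [mul_le_mul_of_nonneg_left hq_lower (hw_nonneg t ht.le)]
  have hexp : exp (2 * t) ≤ exp (2 * t + Λ * exp (-2 * t)) :=
    exp_le_exp.mpr (le_add_of_nonneg_right ((abs_nonneg _).trans (hq t ht)))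
  calc w t = w t * exp (2 * t) * exp (-2 * t) := by
        rw [mul_assoc, ← exp_add]; simp
    _ ≤ w t * exp (2 * t + Λ * exp (-2 * t)) * exp (-2 * t) := by
        gcongr; exact hw_nonneg t ht
    _ ≤ w t₀ * exp (2 * t₀ + Λ * exp (-2 * t₀)) * exp (-2 * t) :=
        mul_le_mul_of_nonneg_right (hanti self_mem_Ici ht ht) (exp_pos _).le

end Riccati

theorem phi_convergence_general (t₀ Λ : ℝ)
    (φ q : ℝ → ℝ)
    (hφ_bd : ∀ t, t₀ ≤ t → |φ t| ≤ 1)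
    (hφ0 : -1 < φ t₀)
    (hq : ∀ t, t₀ ≤ t → |q t - 1| ≤ Λ * Real.exp (-2 * t))
    (hφ : ∀ t, t₀ ≤ t → HasDerivWithinAt φ ((1 - (φ t) ^ 2) * q t) (Set.Ici t₀) t) :
    ∃ C : ℝ, 0 < C ∧ ∀ t, t₀ ≤ t → 0 ≤ 1 - φ t ∧ 1 - φ t ≤ C * Real.exp (-2 * t) := by
  have hpos : ∀ t, t₀ ≤ t → 0 < 1 + φ t := fun t ht =>
    one_add_pos_of_riccati hφ_bd hφ0 hq hφ ht
  set E := exp (2 * t₀ + Λ * exp (-2 * t₀))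
  refine ⟨4 / (1 + φ t₀) * E, mul_pos (div_pos four_pos (hpos t₀ le_rfl)) (exp_pos _),
    fun t ht => ?_⟩
  have hφ_upper := (abs_le.mp (hφ_bd t ht)).2
  refine ⟨sub_nonneg.mpr hφ_upper, ?_⟩
  calc 1 - φ t = (1 - φ t) / (1 + φ t) * (1 + φ t) :=
        (div_mul_cancel₀ _ (hpos t ht).ne').symm
    _ ≤ (1 - φ t) / (1 + φ t) * 2 := by
        gcongr
        · exact div_nonneg (sub_nonneg.mpr hφ_upper) (hpos t ht).le
        · linarith
    _ ≤ (1 - φ t₀) / (1 + φ t₀) * E * exp (-2 * t) * 2 := by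
        gcongr
        exact one_sub_div_one_add_le_of_riccati hφ_bd hq hφ hpos ht
    _ ≤ 2 / (1 + φ t₀) * E * exp (-2 * t) * 2 := by
        gcongr <;> linarith [(abs_le.mp (hφ_bd t₀ le_rfl)).1]
    _ = 4 / (1 + φ t₀) * E * exp (-2 * t) := by ring

/-- Riccati-type ODE estimate from the proof of Lemma 5.4: if `|φ| ≤ 1`,
`φ(t₀) > -1` and `φ' = (1 - φ²) q` with `|q - 1| ≤ Λ e^{-2t}`, then
`0 ≤ 1 - φ(t) ≤ C e^{-2t}`. -/
theorem phi_convergence (t₀ Λ : ℝ) (ht₀ : 0 ≤ t₀) (hΛ : 0 < Λ)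
    (φ q : ℝ → ℝ)
    (hφ_bd : ∀ t, t₀ ≤ t → |φ t| ≤ 1)
    (hφ0 : -1 < φ t₀)
    (hq_cont : ContinuousOn q (Set.Ici t₀))
    (hq : ∀ t, t₀ ≤ t → |q t - 1| ≤ Λ * Real.exp (-2 * t))
    (hφ : ∀ t, t₀ ≤ t → HasDerivWithinAt φ ((1 - (φ t) ^ 2) * q t) (Set.Ici t₀) t) :
    ∃ C : ℝ, 0 < C ∧ ∀ t, t₀ ≤ t → 0 ≤ 1 - φ t ∧ 1 - φ t ≤ C * Real.exp (-2 * t) :=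
  phi_convergence_general t₀ Λ φ q hφ_bd hφ0 hq hφ
end
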